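/- arXiv:1605.02966 — 5 statements merged into one kernel-verified Lean document; each statement's English description precedes it below -/
import Mathlib

section
/- Let γ be a gauge on ℝ^d, x, y ∈ ℝ^d with 0 ≤ ε < γ(x). Then x ⊥_B^ε y (i.e., γ(x) ≤ γ(x + λy) + ε for all λ ∈ ℝ) if and only if there exists x* ∈ ∂_ε γ(x) with ⟨x*, y⟩ = 0. -/
/-!
The function `N z = inf_λ γ (z + λ y)` is again sublinear, lies below `γ`, and vanishes on the
line `ℝ y`; ε-Birkhoff orthogonality says exactly that `γ x - ε ≤ N x`. Hahn–Banach gives a linear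
functional `g ≤ N` with `g x = N x`; it kills `y` and, represented by a vector via Riesz, is an
ε-subgradient of `γ` at `x`. Conversely, an ε-subgradient annihilating `y` gives
`γ x - ε ≤ γ (x + λ y)` directly from the subgradient inequality at `x + λ y`.
-/

open scoped RealInnerProductSpace

noncomputable section

variable {d : ℕ}

/-- A gauge on ℝ^d: nonnegative, vanishing only at 0, positively homogeneous, subadditive. -/
def IsGauge (γ : EuclideanSpace ℝ (Fin d) → ℝ) : Prop :=
  (∀ x, 0 ≤ γ x) ∧ (∀ x, γ x = 0 → x = 0) ∧
  (∀ (x : EuclideanSpace ℝ (Fin d)) (l : ℝ), 0 < l → γ (l • x) = l * γ x) ∧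
  (∀ x y, γ (x + y) ≤ γ x + γ y)

/-- The polar function of a gauge. -/
def polarGauge (γ : EuclideanSpace ℝ (Fin d) → ℝ) : EuclideanSpace ℝ (Fin d) → ℝ :=
  fun xs => sInf {l : ℝ | 0 < l ∧ ∀ x, ⟪xs, x⟫ ≤ l * γ x}

/-- The ε-subdifferential of f at x. -/
def epsSubdiff (f : EuclideanSpace ℝ (Fin d) → ℝ) (ε : ℝ) (x : EuclideanSpace ℝ (Fin d)) :
    Set (EuclideanSpace ℝ (Fin d)) :=
  {xs | ∀ y, ⟪xs, y - x⟫ ≤ f y - f x + ε}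

/-- ε-Birkhoff orthogonality: x ⊥_B^ε y iff γ x ≤ γ (x + λ y) + ε for all λ. -/
def BirkhoffEps (γ : EuclideanSpace ℝ (Fin d) → ℝ) (ε : ℝ)
    (x y : EuclideanSpace ℝ (Fin d)) : Prop :=
  ∀ l : ℝ, γ x ≤ γ (x + l • y) + ε

/-- The ε-directional derivative of f at x in direction y. -/
def epsDirDeriv (f : EuclideanSpace ℝ (Fin d) → ℝ) (ε : ℝ)
    (x y : EuclideanSpace ℝ (Fin d)) : ℝ :=
  sInf {q : ℝ | ∃ l : ℝ, 0 < l ∧ q = (f (x + l • y) - f x + ε) / l}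

structure IsSublinear {E : Type*} [AddCommGroup E] [Module ℝ E] (N : E → ℝ) : Prop where
  smul_of_pos : ∀ c : ℝ, 0 < c → ∀ x, N (c • x) = c * N x
  add_le : ∀ x y, N (x + y) ≤ N x + N y

namespace IsSublinear

variable {E : Type*} [AddCommGroup E] [Module ℝ E] {N : E → ℝ}

theorem map_zero (hN : IsSublinear N) : N 0 = 0 := by
  have h := hN.smul_of_pos 2 two_pos 0
  rw [smul_zero] at h
  linarith

theorem mul_le_smul (hN : IsSublinear N) (c : ℝ) (x : E) : c * N x ≤ N (c • x) := by
  rcases lt_trichotomy c 0 with hc | rfl | hc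
  · have h := hN.add_le (c • x) ((-c) • x)
    rw [← add_smul, add_neg_cancel, zero_smul, hN.map_zero, hN.smul_of_pos _ (neg_pos.2 hc)] at h
    linarith
  · simp [hN.map_zero]
  · exact (hN.smul_of_pos c hc x).ge

/-- Hahn–Banach in its support-functional form. -/
theorem exists_linearMap_le_eq (hN : IsSublinear N) (x : E) :
    ∃ g : E →ₗ[ℝ] ℝ, (∀ z, g z ≤ N z) ∧ g x = N x := by
  have hker : ∀ c : ℝ, c • x = 0 → (RingHom.id ℝ) c • N x = 0 := by
    intro c hcx
    rcases smul_eq_zero.1 hcx with rfl | rfl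
    · simp
    · simp [hN.map_zero]
  let f : E →ₗ.[ℝ] ℝ := LinearPMap.mkSpanSingleton' x (N x) hker
  have hfN : ∀ z : f.domain, f z ≤ N z := by
    rintro ⟨z, hz⟩
    obtain ⟨c, rfl⟩ := Submodule.mem_span_singleton.1 hz
    rw [LinearPMap.mkSpanSingleton'_apply]
    exact hN.mul_le_smul c x
  obtain ⟨g, hgf, hgN⟩ := exists_extension_of_le_sublinear f N hN.smul_of_pos hN.add_le hfN
  exact ⟨g, hgN, (hgf ⟨x, Submodule.mem_span_singleton_self x⟩).trans
    (LinearPMap.mkSpanSingleton'_apply_self _ _ _ _)⟩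

end IsSublinear

theorem IsGauge.isSublinear {γ : EuclideanSpace ℝ (Fin d) → ℝ} (hγ : IsGauge γ) :
    IsSublinear γ :=
  ⟨fun c hc x => hγ.2.2.1 x c hc, hγ.2.2.2⟩

section InfAlong

variable {E : Type*} [AddCommGroup E] [Module ℝ E] {γ : E → ℝ}

def infAlong (γ : E → ℝ) (y z : E) : ℝ :=
  ⨅ l : ℝ, γ (z + l • y)

theorem infAlong_le (hγ : ∀ z, 0 ≤ γ z) (y z : E) (l : ℝ) : infAlong γ y z ≤ γ (z + l • y) :=
  ciInf_le ⟨0, by rintro _ ⟨l, rfl⟩; exact hγ _⟩ l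

theorem infAlong_le_self (hγ : ∀ z, 0 ≤ γ z) (y z : E) : infAlong γ y z ≤ γ z := by
  simpa using infAlong_le hγ y z 0

theorem le_infAlong {y z : E} {a : ℝ} (h : ∀ l : ℝ, a ≤ γ (z + l • y)) : a ≤ infAlong γ y z :=
  le_ciInf h

theorem infAlong_smul_self_le (hγ : ∀ z, 0 ≤ γ z) (y : E) (c : ℝ) :
    infAlong γ y (c • y) ≤ γ 0 := by
  simpa using infAlong_le hγ y (c • y) (-c)

theorem isSublinear_infAlong (hγ₀ : ∀ z, 0 ≤ γ z) (hγ : IsSublinear γ) (y : E) :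
    IsSublinear (infAlong γ y) where
  smul_of_pos c hc z := by
    apply le_antisymm
    · rw [← div_le_iff₀' hc]
      refine le_infAlong fun l => ?_
      rw [div_le_iff₀' hc, ← hγ.smul_of_pos c hc, smul_add, smul_smul]
      exact infAlong_le hγ₀ y _ _
    · refine le_infAlong fun l => ?_
      have hline : c • z + l • y = c • (z + (l / c) • y) := by
        rw [smul_add, smul_smul, mul_div_cancel₀ _ hc.ne']
      rw [hline, hγ.smul_of_pos c hc]
      exact mul_le_mul_of_nonneg_left (infAlong_le hγ₀ y z _) hc.le
  add_le z w := by
    suffices h : ∀ l₁ l₂ : ℝ, infAlong γ y (z + w) - γ (z + l₁ • y) ≤ γ (w + l₂ • y) by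
      have : infAlong γ y (z + w) - infAlong γ y w ≤ infAlong γ y z :=
        le_infAlong fun l₁ => sub_le_comm.1 (le_infAlong (h l₁ ·))
      linarith
    intro l₁ l₂
    have hline : z + w + (l₁ + l₂) • y = (z + l₁ • y) + (w + l₂ • y) := by module
    have := infAlong_le hγ₀ y (z + w) (l₁ + l₂)
    rw [hline] at this
    linarith [hγ.add_le (z + l₁ • y) (w + l₂ • y)]

theorem LinearMap.apply_eq_zero_of_le_infAlong (hγ₀ : ∀ z, 0 ≤ γ z) (hγ : IsSublinear γ)
    {y : E} {g : E →ₗ[ℝ] ℝ} (hg : ∀ z, g z ≤ infAlong γ y z) : g y = 0 := by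
  have h : ∀ c : ℝ, c * g y ≤ 0 := fun c => by
    simpa [hγ.map_zero] using (hg (c • y)).trans (infAlong_smul_self_le hγ₀ y c)
  linarith [h 1, h (-1)]

end InfAlong

theorem exists_inner_eq_linearMap {E : Type*} [NormedAddCommGroup E] [InnerProductSpace ℝ E]
    [FiniteDimensional ℝ E] (g : E →ₗ[ℝ] ℝ) : ∃ v : E, ∀ z, ⟪v, z⟫ = g z :=
  ⟨(InnerProductSpace.toDual ℝ E).symm (LinearMap.toContinuousLinearMap g),
    fun _ => InnerProductSpace.toDual_symm_apply⟩

theorem mem_epsSubdiff_of_inner_le {γ : EuclideanSpace ℝ (Fin d) → ℝ} {ε : ℝ}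
    {x xs : EuclideanSpace ℝ (Fin d)} (hle : ∀ z, ⟪xs, z⟫ ≤ γ z) (hx : γ x - ε ≤ ⟪xs, x⟫) :
    xs ∈ epsSubdiff γ ε x := by
  intro z
  rw [inner_sub_right]
  linarith [hle z]

theorem birkhoffEps_iff_le_infAlong {γ : EuclideanSpace ℝ (Fin d) → ℝ} (hγ : ∀ z, 0 ≤ γ z)
    {ε : ℝ} {x y : EuclideanSpace ℝ (Fin d)} :
    BirkhoffEps γ ε x y ↔ γ x - ε ≤ infAlong γ y x :=
  ⟨fun h => le_infAlong fun l => by linarith [h l],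
    fun h l => by linarith [infAlong_le hγ y x l]⟩

theorem BirkhoffEps.of_mem_epsSubdiff {γ : EuclideanSpace ℝ (Fin d) → ℝ} {ε : ℝ}
    {x y xs : EuclideanSpace ℝ (Fin d)} (hxs : xs ∈ epsSubdiff γ ε x) (hxy : ⟪xs, y⟫ = 0) :
    BirkhoffEps γ ε x y := by
  intro l
  have h := hxs (x + l • y)
  rw [add_sub_cancel_left, real_inner_smul_right, hxy, mul_zero] at h
  linarith

theorem birkhoff_iff_annihilating_eps_subgradient_general (γ : EuclideanSpace ℝ (Fin d) → ℝ)
    (hγ : IsGauge γ) (x y : EuclideanSpace ℝ (Fin d)) (ε : ℝ) :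
    BirkhoffEps γ ε x y ↔ ∃ xs ∈ epsSubdiff γ ε x, ⟪xs, y⟫ = 0 := by
  refine ⟨fun hB => ?_, fun ⟨_, hxs, hxy⟩ => BirkhoffEps.of_mem_epsSubdiff hxs hxy⟩
  have hN := isSublinear_infAlong hγ.1 hγ.isSublinear y
  obtain ⟨g, hgN, hgx⟩ := hN.exists_linearMap_le_eq x
  obtain ⟨xs, hxs⟩ := exists_inner_eq_linearMap g
  refine ⟨xs, mem_epsSubdiff_of_inner_le (fun z => ?_) ?_, ?_⟩
  · rw [hxs]
    exact (hgN z).trans (infAlong_le_self hγ.1 y z)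
  · rw [hxs, hgx]
    exact (birkhoffEps_iff_le_infAlong hγ.1).1 hB
  · rw [hxs]
    exact g.apply_eq_zero_of_le_infAlong hγ.1 hγ.isSublinear hgN

theorem birkhoff_iff_annihilating_eps_subgradient (γ : EuclideanSpace ℝ (Fin d) → ℝ)
    (hγ : IsGauge γ) (x y : EuclideanSpace ℝ (Fin d)) (ε : ℝ) (hε : 0 ≤ ε)
    (hεx : ε < γ x) :
    BirkhoffEps γ ε x y ↔ ∃ xs ∈ epsSubdiff γ ε x, ⟪xs, y⟫ = 0 :=
  birkhoff_iff_annihilating_eps_subgradient_general γ hγ x y ε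
end
end

section
/- Let γ be a gauge on ℝ^d, x, y ∈ ℝ^d, α ∈ ℝ. If x ⊥_B (αx + y), then −γ'(x; −y) ≤ −α γ(x) ≤ γ'(x; y), where γ'(x;·) is the directional derivative of γ at x. -/
open scoped RealInnerProductSpace

noncomputable section

variable {d : ℕ}

theorem BirkhoffEps.neg_right {γ : EuclideanSpace ℝ (Fin d) → ℝ} {ε : ℝ}
    {x v : EuclideanSpace ℝ (Fin d)} (h : BirkhoffEps γ ε x v) : BirkhoffEps γ ε x (-v) := by
  intro l
  simpa only [smul_neg, neg_smul] using h (-l)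

theorem le_epsDirDeriv_of_forall_mul_le {f : EuclideanSpace ℝ (Fin d) → ℝ} {ε c : ℝ}
    {x y : EuclideanSpace ℝ (Fin d)} (hc : ∀ l : ℝ, 0 < l → c * l ≤ f (x + l • y) - f x + ε) :
    c ≤ epsDirDeriv f ε x y := by
  refine le_csInf ⟨_, 1, one_pos, rfl⟩ ?_
  rintro q ⟨l, hl, rfl⟩
  exact (le_div_iff₀ hl).2 (hc l hl)

/-- Rescaling `x + l • y` by `(1 - l * α)⁻¹` turns it into a point `x + t • (α • x + y)` of the
line along which `x` is Birkhoff orthogonal. -/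
theorem BirkhoffEps.one_sub_mul_le {γ : EuclideanSpace ℝ (Fin d) → ℝ}
    (hnonneg : ∀ z, 0 ≤ γ z) (hhom : ∀ z (t : ℝ), 0 < t → γ (t • z) = t * γ z)
    {x y : EuclideanSpace ℝ (Fin d)} {α : ℝ} (h : BirkhoffEps γ 0 x (α • x + y))
    (l : ℝ) : (1 - l * α) * γ x ≤ γ (x + l • y) := by
  rcases le_or_gt (1 - l * α) 0 with hneg | hpos
  · exact (mul_nonpos_of_nonpos_of_nonneg hneg (hnonneg x)).trans (hnonneg _)
  · have hline : x + (l / (1 - l * α)) • (α • x + y) = (1 - l * α)⁻¹ • (x + l • y) := by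
      match_scalars <;> field_simp; ring
    have horth := h (l / (1 - l * α))
    rw [add_zero, hline, hhom _ _ (inv_pos.2 hpos)] at horth
    exact (le_inv_mul_iff₀ hpos).1 horth

theorem BirkhoffEps.neg_mul_le_epsDirDeriv {γ : EuclideanSpace ℝ (Fin d) → ℝ}
    (hnonneg : ∀ z, 0 ≤ γ z) (hhom : ∀ z (t : ℝ), 0 < t → γ (t • z) = t * γ z)
    {x y : EuclideanSpace ℝ (Fin d)} {α : ℝ} (h : BirkhoffEps γ 0 x (α • x + y)) :
    -(α * γ x) ≤ epsDirDeriv γ 0 x y :=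
  le_epsDirDeriv_of_forall_mul_le fun l _ => by
    have := h.one_sub_mul_le hnonneg hhom l
    linarith

theorem birkhoff_directional_derivative_bounds (γ : EuclideanSpace ℝ (Fin d) → ℝ)
    (hγ : IsGauge γ) (x y : EuclideanSpace ℝ (Fin d)) (α : ℝ)
    (h : BirkhoffEps γ 0 x (α • x + y)) :
    -(epsDirDeriv γ 0 x (-y)) ≤ -(α * γ x) ∧ -(α * γ x) ≤ epsDirDeriv γ 0 x y := by
  obtain ⟨hnonneg, -, hhom, -⟩ := hγ
  have hneg : BirkhoffEps γ 0 x ((-α) • x + -y) := by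
    simpa only [neg_add, neg_smul] using h.neg_right
  constructor
  · have := hneg.neg_mul_le_epsDirDeriv hnonneg hhom
    linarith
  · exact h.neg_mul_le_epsDirDeriv hnonneg hhom
end
end

section
/- Let γ be a gauge on ℝ^d, x, y ∈ ℝ^d, and 0 ≤ ε < γ(x). The set of numbers α ∈ ℝ for which x ⊥_B^ε (αx + y) is a non-empty compact interval. Moreover, if x ⊥_B^ε (αx+y), then |α| ≤ max{γ(y)/(γ(x)−ε), γ(−y)/(γ(x)−ε)}. -/
open scoped RealInnerProductSpace

noncomputable section

variable {d : ℕ}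

/-!
Put `c = γ x - ε > 0`. For `λ ≠ 0` and `t = α + λ⁻¹` we have `x + λ • (α • x + y) = λ • (t • x + y)`,
so by positive homogeneity `x ⊥_B^ε (α • x + y)` says exactly that
`t - γ (t • x + y) / c ≤ α ≤ t + γ (-(t • x + y)) / c` for every `t`. The solution set is thus an
intersection of closed intervals, and it is a nonempty closed interval because every lower
endpoint lies below every upper endpoint: by subadditivity
`(t - t') * γ x ≤ γ (t • x + y) + γ (-(t' • x + y))`. Taking `t = 0` bounds `|α|`.
-/

theorem Set.iInter_Icc_eq_Icc_ciSup_ciInf {ι α : Type*} [Nonempty ι]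
    [ConditionallyCompleteLattice α] {f g : ι → α} (h : ∀ i j, f i ≤ g j) :
    ⋂ i, Icc (f i) (g i) = Icc (⨆ i, f i) (⨅ i, g i) := by
  obtain ⟨j⟩ : Nonempty ι := inferInstance
  have hf : BddAbove (range f) := ⟨g j, forall_mem_range.2 fun i => h i j⟩
  have hg : BddBelow (range g) := ⟨f j, forall_mem_range.2 (h j)⟩
  ext a
  simp only [mem_iInter, mem_Icc, ciSup_le_iff hf, le_ciInf_iff hg, forall_and]

variable {γ : EuclideanSpace ℝ (Fin d) → ℝ} {x y : EuclideanSpace ℝ (Fin d)} {ε : ℝ}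

theorem birkhoffEps_iff_forall_pos (hε : 0 ≤ ε) {z : EuclideanSpace ℝ (Fin d)} :
    BirkhoffEps γ ε x z ↔
      (∀ l : ℝ, 0 < l → γ x ≤ γ (x + l • z) + ε) ∧ ∀ l : ℝ, 0 < l → γ x ≤ γ (x + l • -z) + ε := by
  refine ⟨fun h => ⟨fun l _ => h l, fun l _ => smul_neg l z ▸ neg_smul l z ▸ h (-l)⟩, ?_⟩
  rintro ⟨hpos, hneg⟩ l
  rcases lt_trichotomy l 0 with hl | rfl | hl
  · simpa using hneg (-l) (neg_pos.2 hl)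
  · simpa using hε
  · exact hpos l hl

namespace IsGauge

variable (hγ : IsGauge γ)
include hγ

theorem nonneg (x : EuclideanSpace ℝ (Fin d)) : 0 ≤ γ x := hγ.1 x

theorem map_smul_of_pos {l : ℝ} (hl : 0 < l) (x : EuclideanSpace ℝ (Fin d)) :
    γ (l • x) = l * γ x := hγ.2.2.1 x l hl

theorem map_add_le (x y : EuclideanSpace ℝ (Fin d)) : γ (x + y) ≤ γ x + γ y := hγ.2.2.2 x y

theorem sub_mul_le_add {c : ℝ} (hc : 0 ≤ c) (hcx : c ≤ γ x) (t t' : ℝ) :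
    (t - t') * c ≤ γ (t • x + y) + γ (-(t' • x + y)) := by
  rcases le_or_gt t t' with htt | htt
  · nlinarith [hγ.nonneg (t • x + y), hγ.nonneg (-(t' • x + y))]
  · have hsplit : (t - t') • x = (t • x + y) + -(t' • x + y) := by rw [sub_smul]; abel
    calc (t - t') * c ≤ (t - t') * γ x := by gcongr
      _ = γ ((t - t') • x) := (hγ.map_smul_of_pos (sub_pos.2 htt) x).symm
      _ ≤ γ (t • x + y) + γ (-(t' • x + y)) := hsplit ▸ hγ.map_add_le _ _

theorem map_add_smul_smul_add {l : ℝ} (hl : 0 < l) (α : ℝ) :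
    γ (x + l • (α • x + y)) = l * γ ((α + l⁻¹) • x + y) := by
  rw [← hγ.map_smul_of_pos hl, smul_add, smul_add, smul_smul, smul_smul, mul_add,
    mul_inv_cancel₀ hl.ne', add_smul, one_smul]
  congr 1
  abel

theorem forall_pos_le_add_smul_iff (hεx : ε < γ x) (α : ℝ) :
    (∀ l : ℝ, 0 < l → γ x ≤ γ (x + l • (α • x + y)) + ε) ↔
      ∀ t, t - γ (t • x + y) / (γ x - ε) ≤ α := by
  have hc : 0 < γ x - ε := sub_pos.2 hεx
  constructor
  · intro h t
    rcases le_or_gt t α with htα | htα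
    · linarith [div_nonneg (hγ.nonneg (t • x + y)) hc.le]
    · have hl : 0 < (t - α)⁻¹ := inv_pos.2 (sub_pos.2 htα)
      have := h _ hl
      rw [hγ.map_add_smul_smul_add hl, inv_inv, add_sub_cancel] at this
      rw [sub_le_comm, le_div_iff₀ hc]
      exact (le_inv_mul_iff₀ (sub_pos.2 htα)).1 (by linarith)
  · intro h l hl
    have := h (α + l⁻¹)
    rw [add_sub_assoc, add_le_iff_nonpos_right, sub_nonpos, le_div_iff₀ hc,
      inv_mul_le_iff₀ hl] at this
    rw [hγ.map_add_smul_smul_add hl]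
    linarith

theorem birkhoffEps_smul_add_iff (hε : 0 ≤ ε) (hεx : ε < γ x) (α : ℝ) :
    BirkhoffEps γ ε x (α • x + y) ↔ ∀ t,
      α ∈ Set.Icc (t - γ (t • x + y) / (γ x - ε)) (t + γ (-(t • x + y)) / (γ x - ε)) := by
  rw [birkhoffEps_iff_forall_pos hε, neg_add, ← neg_smul, hγ.forall_pos_le_add_smul_iff hεx,
    hγ.forall_pos_le_add_smul_iff hεx]
  simp only [Set.mem_Icc, forall_and]
  refine and_congr_right' ⟨fun h t => ?_, fun h t => ?_⟩
  · rw [neg_add, ← neg_smul]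
    linarith [h (-t)]
  · have := h (-t)
    rw [neg_add, neg_smul, neg_neg] at this
    linarith

end IsGauge

theorem right_birkhoff_existence (γ : EuclideanSpace ℝ (Fin d) → ℝ) (hγ : IsGauge γ)
    (x y : EuclideanSpace ℝ (Fin d)) (ε : ℝ) (hε : 0 ≤ ε) (hεx : ε < γ x) :
    (∃ a b : ℝ, a ≤ b ∧
      {α : ℝ | BirkhoffEps γ ε x (α • x + y)} = Set.Icc a b) ∧
    ∀ α : ℝ, BirkhoffEps γ ε x (α • x + y) →
      |α| ≤ max (γ y / (γ x - ε)) (γ (-y) / (γ x - ε)) := by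
  have hc : 0 < γ x - ε := sub_pos.2 hεx
  have hS : {α | BirkhoffEps γ ε x (α • x + y)} =
      ⋂ t : ℝ, Set.Icc (t - γ (t • x + y) / (γ x - ε)) (t + γ (-(t • x + y)) / (γ x - ε)) := by
    ext α
    simp only [Set.mem_ofPred_eq, Set.mem_iInter, hγ.birkhoffEps_smul_add_iff hε hεx]
  have hle (t t' : ℝ) :
      t - γ (t • x + y) / (γ x - ε) ≤ t' + γ (-(t' • x + y)) / (γ x - ε) := by
    have := hγ.sub_mul_le_add hc.le (sub_le_self _ hε) (y := y) t t'
    rw [← le_div_iff₀ hc, add_div] at this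
    linarith
  refine ⟨⟨_, _, ciSup_le fun t => le_ciInf (hle t),
    hS.trans (Set.iInter_Icc_eq_Icc_ciSup_ciInf hle)⟩, fun α hα => ?_⟩
  have h0 := (hγ.birkhoffEps_smul_add_iff hε hεx α).1 hα 0
  simp only [zero_smul, zero_add, zero_sub, Set.mem_Icc] at h0
  exact abs_le.2 ⟨by linarith [le_max_left (γ y / (γ x - ε)) (γ (-y) / (γ x - ε))],
    h0.2.trans (le_max_right _ _)⟩
end
end

section
/- Let γ be a gauge on ℝ^d, x, x* ∈ ℝ^d with γ°(x*) = 1 and 0 ≤ ε < γ(x). The following are equivalent: (a) x* ∈ ∂_ε γ(x); (b) ⟨x*, x⟩ ≥ γ(x) − ε; (c) ⟨x*, x⟩ > 0 and x ⊥_B^ε h for all h with ⟨x*, h⟩ = 0; (d) sup{⟨x*, z⟩ : γ(z) ≤ γ(x) − ε} ≤ ⟨x*, x⟩. -/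
open scoped RealInnerProductSpace

noncomputable section

variable {d : ℕ}

/-!
Since `γ°(x*) = 1`, the functional `⟪x*, ·⟫` is dominated by `γ`, and its supremum over the
sublevel set `{γ ≤ r}` is exactly `r`. Domination gives (b) ⇒ (a), (c), while (a) ⇒ (b) is
the subgradient inequality at `y = 0`, and (d) ⇔ (b) because the supremum in (d) equals
`γ x - ε`. For (c) ⇒ (b), a point `z` of `{γ ≤ γ x - ε}` with `⟪x*, z⟫ > 0` is rescaled to
`c • z` with `⟪x*, x - c • z⟫ = 0`; ε-orthogonality of `x` to `x - c • z` gives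
`γ x ≤ c γ z + ε`, which forces `c ≥ 1`, i.e. `⟪x*, z⟫ ≤ ⟪x*, x⟫`.
-/

variable {γ : EuclideanSpace ℝ (Fin d) → ℝ} {ε : ℝ} {x xs : EuclideanSpace ℝ (Fin d)}

theorem IsGauge.map_zero (hγ : IsGauge γ) : γ 0 = 0 := by
  have h := hγ.2.2.1 0 2 two_pos
  rw [smul_zero] at h
  linarith

theorem inner_le_polarGauge_mul (hp : polarGauge γ xs ≠ 0) {z : EuclideanSpace ℝ (Fin d)}
    (hz : 0 ≤ γ z) : ⟪xs, z⟫ ≤ polarGauge γ xs * γ z := by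
  have hne : {l : ℝ | 0 < l ∧ ∀ x, ⟪xs, x⟫ ≤ l * γ x}.Nonempty :=
    Set.nonempty_iff_ne_empty.2 fun h => hp (by simp [polarGauge, h])
  rw [mul_comm, polarGauge, ← smul_eq_mul, ← Real.sInf_smul_of_nonneg hz]
  refine le_csInf hne.smul_set ?_
  rintro _ ⟨l, hl, rfl⟩
  exact (hl.2 z).trans_eq (mul_comm _ _)

theorem IsGauge.inner_le_div_mul_of_forall_le (hγ : IsGauge γ) {r b : ℝ} (hr : 0 < r)
    (hb : ∀ z, γ z ≤ r → ⟪xs, z⟫ ≤ b) (z : EuclideanSpace ℝ (Fin d)) :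
    ⟪xs, z⟫ ≤ b / r * γ z := by
  rcases (hγ.1 z).eq_or_lt with hz | hz
  · rw [hγ.2.1 z hz.symm, inner_zero_right, hγ.map_zero, mul_zero]
  have hscaled := hb ((r / γ z) • z)
    (by rw [hγ.2.2.1 z _ (by positivity), div_mul_cancel₀ _ hz.ne'])
  rw [real_inner_smul_right, div_mul_eq_mul_div, div_le_iff₀ hz] at hscaled
  rw [div_mul_eq_mul_div, le_div_iff₀ hr]
  linarith

theorem IsGauge.isLUB_inner_sublevel (hγ : IsGauge γ) (hp : polarGauge γ xs ≠ 0) {r : ℝ}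
    (hr : 0 < r) :
    IsLUB {t : ℝ | ∃ z : EuclideanSpace ℝ (Fin d), γ z ≤ r ∧ t = ⟪xs, z⟫}
      (polarGauge γ xs * r) := by
  have hp_nonneg : 0 ≤ polarGauge γ xs := Real.sInf_nonneg fun l hl => hl.1.le
  constructor
  · rintro _ ⟨z, hz, rfl⟩
    exact (inner_le_polarGauge_mul hp (hγ.1 z)).trans
      (mul_le_mul_of_nonneg_left hz hp_nonneg)
  · intro b hb
    have hb' : ∀ z, γ z ≤ r → ⟪xs, z⟫ ≤ b := fun z hz => hb ⟨z, hz, rfl⟩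
    have hb_nonneg : 0 ≤ b := by simpa using hb' 0 (by rw [hγ.map_zero]; exact hr.le)
    rw [← le_div_iff₀ hr]
    refine le_of_forall_gt_imp_ge_of_dense fun c hc => csInf_le ⟨0, fun l hl => hl.1.le⟩ ?_
    refine ⟨(div_nonneg hb_nonneg hr.le).trans_lt hc, fun z => ?_⟩
    exact (hγ.inner_le_div_mul_of_forall_le hr hb' z).trans
      (mul_le_mul_of_nonneg_right hc.le (hγ.1 z))

theorem mem_epsSubdiff_iff_of_inner_le {f : EuclideanSpace ℝ (Fin d) → ℝ} (h0 : f 0 = 0)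
    (hle : ∀ z, ⟪xs, z⟫ ≤ f z) : xs ∈ epsSubdiff f ε x ↔ f x - ε ≤ ⟪xs, x⟫ := by
  refine ⟨fun hx => ?_, fun hx y => ?_⟩
  · have h := hx 0
    rw [zero_sub, inner_neg_right, h0] at h
    linarith
  · rw [inner_sub_right]
    linarith [hle y]

theorem birkhoffEps_of_inner_le (hle : ∀ z, ⟪xs, z⟫ ≤ γ z) (hx : γ x - ε ≤ ⟪xs, x⟫)
    {h : EuclideanSpace ℝ (Fin d)} (hh : ⟪xs, h⟫ = 0) : BirkhoffEps γ ε x h := by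
  intro l
  have h1 := hle (x + l • h)
  rw [inner_add_right, real_inner_smul_right, hh, mul_zero, add_zero] at h1
  linarith

theorem IsGauge.inner_le_of_birkhoffEps (hγ : IsGauge γ) (hεx : ε < γ x) (hx : 0 < ⟪xs, x⟫)
    (horth : ∀ h, ⟪xs, h⟫ = 0 → BirkhoffEps γ ε x h) {z : EuclideanSpace ℝ (Fin d)}
    (hz : γ z ≤ γ x - ε) : ⟪xs, z⟫ ≤ ⟪xs, x⟫ := by
  rcases le_or_gt ⟪xs, z⟫ 0 with hz0 | hz0
  · linarith
  set c := ⟪xs, x⟫ / ⟪xs, z⟫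
  have hc : 0 < c := div_pos hx hz0
  have hperp : ⟪xs, x - c • z⟫ = 0 := by
    rw [inner_sub_right, real_inner_smul_right, div_mul_cancel₀ _ hz0.ne', sub_self]
  have hbirk := horth _ hperp (-1)
  rw [show x + (-1 : ℝ) • (x - c • z) = c • z by module, hγ.2.2.1 z c hc] at hbirk
  have hc1 : 1 ≤ c := by nlinarith
  rwa [le_div_iff₀ hz0, one_mul] at hc1

theorem eps_subgradient_tfae_general (γ : EuclideanSpace ℝ (Fin d) → ℝ) (hγ : IsGauge γ)
    (x xs : EuclideanSpace ℝ (Fin d)) (hxs : polarGauge γ xs = 1)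
    (ε : ℝ) (hεx : ε < γ x) :
    [xs ∈ epsSubdiff γ ε x,
     γ x - ε ≤ ⟪xs, x⟫,
     0 < ⟪xs, x⟫ ∧ ∀ h : EuclideanSpace ℝ (Fin d), ⟪xs, h⟫ = 0 → BirkhoffEps γ ε x h,
     sSup {t : ℝ | ∃ z : EuclideanSpace ℝ (Fin d), γ z ≤ γ x - ε ∧ t = ⟪xs, z⟫} ≤
       ⟪xs, x⟫].TFAE := by
  have hp : polarGauge γ xs ≠ 0 := by rw [hxs]; exact one_ne_zero
  have hle : ∀ z, ⟪xs, z⟫ ≤ γ z := fun z => by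
    simpa [hxs] using inner_le_polarGauge_mul hp (hγ.1 z)
  have hsup := hγ.isLUB_inner_sublevel hp (sub_pos.2 hεx)
  rw [hxs, one_mul] at hsup
  rw [hsup.csSup_eq ⟨0, 0, by rw [hγ.map_zero]; linarith, by simp⟩]
  tfae_have 1 ↔ 2 := mem_epsSubdiff_iff_of_inner_le hγ.map_zero hle
  tfae_have 2 → 3 := fun hx =>
    ⟨by linarith, fun _ hh => birkhoffEps_of_inner_le hle hx hh⟩
  tfae_have 3 → 2 := fun ⟨hx, horth⟩ =>
    hsup.2 fun _ ⟨_, hz, ht⟩ => ht ▸ hγ.inner_le_of_birkhoffEps hεx hx horth hz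
  tfae_have 2 ↔ 4 := Iff.rfl
  tfae_finish

theorem eps_subgradient_tfae (γ : EuclideanSpace ℝ (Fin d) → ℝ) (hγ : IsGauge γ)
    (x xs : EuclideanSpace ℝ (Fin d)) (hxs : polarGauge γ xs = 1)
    (ε : ℝ) (hε : 0 ≤ ε) (hεx : ε < γ x) :
    [xs ∈ epsSubdiff γ ε x,
     γ x - ε ≤ ⟪xs, x⟫,
     0 < ⟪xs, x⟫ ∧ ∀ h : EuclideanSpace ℝ (Fin d), ⟪xs, h⟫ = 0 → BirkhoffEps γ ε x h,
     sSup {t : ℝ | ∃ z : EuclideanSpace ℝ (Fin d), γ z ≤ γ x - ε ∧ t = ⟪xs, z⟫} ≤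
       ⟪xs, x⟫].TFAE :=
  eps_subgradient_tfae_general γ hγ x xs hxs ε hεx
end
end

section
/- Let γ be a gauge on ℝ^d (d ≥ 2). The gauge γ is Gâteaux differentiable on ℝ^d \ {0} if and only if Birkhoff orthogonality is right additive, i.e., for all x, y, z ∈ ℝ^d, x ⊥_B y and x ⊥_B z imply x ⊥_B (y + z). -/
open scoped RealInnerProductSpace

noncomputable section

variable {d : ℕ}

/-- Gâteaux differentiability of γ at x: the one-sided directional derivative
exists and is linear in the direction. -/
def GateauxDiffAt (γ : EuclideanSpace ℝ (Fin d) → ℝ) (x : EuclideanSpace ℝ (Fin d)) : Prop :=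
  ∃ L : EuclideanSpace ℝ (Fin d) →ₗ[ℝ] ℝ, ∀ y,
    Filter.Tendsto (fun l : ℝ => (γ (x + l • y) - γ x) / l)
      (nhdsWithin 0 (Set.Ioi 0)) (nhds (L y))


/-!
For convex `γ` the difference quotients `t ↦ (γ (x + t • y) - γ x) / t` are monotone, so the
one-sided directional derivative `p y = γ'(x; y)` is their infimum, and it is sublinear in `y`;
Gâteaux differentiability at `x` says that `p` is linear. Birkhoff orthogonality `x ⊥_B y` means
`p y ≥ 0` and `p (-y) ≥ 0`, which for linear `p` is `p y = 0`: the kernel of a linear form is closed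
under addition. Conversely, homogeneity of `γ` gives `p (y + c • x) = p y + c * γ x`, so
`y - (p y / γ x) • x` is Birkhoff orthogonal to `x`. Right additivity applied to two such vectors
makes `p` superadditive, hence additive, hence linear.
-/

open Set Filter Topology

section DirDeriv

variable {E : Type*} [AddCommGroup E] [Module ℝ E] {f : E → ℝ}

def diffQuot (f : E → ℝ) (x y : E) (t : ℝ) : ℝ :=
  (f (x + t • y) - f x) / t

def dirDeriv (f : E → ℝ) (x y : E) : ℝ :=
  sInf (diffQuot f x y '' Ioi 0)

lemma ConvexOn.comp_line (hf : ConvexOn ℝ univ f) (x y : E) :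
    ConvexOn ℝ univ (fun t : ℝ => f (x + t • y)) := by
  have h := (hf.translate_right x).comp_linearMap (LinearMap.toSpanSingleton ℝ E y)
  simp only [preimage_univ] at h
  exact h

lemma diffQuot_eq_slope (f : E → ℝ) (x y : E) (t : ℝ) :
    diffQuot f x y t = slope (fun s : ℝ => f (x + s • y)) 0 t := by
  simp [diffQuot, slope_def_field]

lemma ConvexOn.monotoneOn_diffQuot (hf : ConvexOn ℝ univ f) (x y : E) :
    MonotoneOn (diffQuot f x y) {0}ᶜ := by
  simpa [funext (diffQuot_eq_slope f x y), compl_eq_univ_sdiff]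
    using (hf.comp_line x y).slope_mono (mem_univ 0)

lemma ConvexOn.bddBelow_diffQuot (hf : ConvexOn ℝ univ f) (x y : E) :
    BddBelow (diffQuot f x y '' Ioi 0) := by
  refine ⟨diffQuot f x y (-1), ?_⟩
  rintro _ ⟨t, ht, rfl⟩
  exact hf.monotoneOn_diffQuot x y (by norm_num) (ne_of_gt ht) (by linarith [mem_Ioi.1 ht])

lemma ConvexOn.dirDeriv_le_diffQuot (hf : ConvexOn ℝ univ f) (x y : E) {t : ℝ} (ht : 0 < t) :
    dirDeriv f x y ≤ diffQuot f x y t :=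
  csInf_le (hf.bddBelow_diffQuot x y) (mem_image_of_mem _ ht)

lemma ConvexOn.tendsto_diffQuot (hf : ConvexOn ℝ univ f) (x y : E) :
    Tendsto (diffQuot f x y) (𝓝[>] 0) (𝓝 (dirDeriv f x y)) :=
  ((hf.monotoneOn_diffQuot x y).mono fun _ ht => ne_of_gt ht).tendsto_nhdsGT
    (hf.bddBelow_diffQuot x y)

lemma ConvexOn.dirDeriv_nonneg_iff (hf : ConvexOn ℝ univ f) (x y : E) :
    0 ≤ dirDeriv f x y ↔ ∀ t : ℝ, 0 < t → f x ≤ f (x + t • y) := by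
  rw [dirDeriv, le_csInf_iff (hf.bddBelow_diffQuot x y) (nonempty_Ioi.image _),
    forall_mem_image]
  refine forall₂_congr fun t ht => ?_
  rw [diffQuot, le_div_iff₀ ht, zero_mul, sub_nonneg]

lemma tendsto_const_mul_nhdsGT_zero {c : ℝ} (hc : 0 < c) :
    Tendsto (c * ·) (𝓝[>] 0) (𝓝[>] 0) := by
  have h : Tendsto (c * ·) (comap (c * ·) (𝓝[>] (0 : ℝ))) (𝓝[>] 0) := tendsto_comap
  rwa [comap_mulLeft_nhdsGT_zero hc] at h

lemma diffQuot_smul (f : E → ℝ) (x y : E) {c : ℝ} (hc : c ≠ 0) (t : ℝ) :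
    diffQuot f x (c • y) t = c * diffQuot f x y (c * t) := by
  rcases eq_or_ne t 0 with rfl | ht
  · simp [diffQuot]
  · simp only [diffQuot, smul_smul, mul_comm t c]
    field_simp

lemma dirDeriv_zero (f : E → ℝ) (x : E) : dirDeriv f x 0 = 0 := by
  have h : diffQuot f x 0 = 0 := funext fun t => by simp [diffQuot]
  rw [dirDeriv, h, Pi.zero_def, nonempty_Ioi.image_const, csInf_singleton]

lemma ConvexOn.dirDeriv_smul_of_pos (hf : ConvexOn ℝ univ f) (x y : E) {c : ℝ} (hc : 0 < c) :
    dirDeriv f x (c • y) = c * dirDeriv f x y := by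
  refine tendsto_nhds_unique (hf.tendsto_diffQuot x (c • y)) ?_
  refine (((hf.tendsto_diffQuot x y).comp (tendsto_const_mul_nhdsGT_zero hc)).const_mul c).congr
    fun t => ?_
  exact (diffQuot_smul f x y hc.ne' t).symm

lemma ConvexOn.dirDeriv_add_le (hf : ConvexOn ℝ univ f) (x y z : E) :
    dirDeriv f x (y + z) ≤ dirDeriv f x y + dirDeriv f x z := by
  have hquot : ∀ t : ℝ, 0 < t → diffQuot f x (y + z) t ≤
      (diffQuot f x ((2 : ℝ) • y) t + diffQuot f x ((2 : ℝ) • z) t) / 2 := by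
    intro t ht
    have hmid : x + t • (y + z) =
        (1 / 2 : ℝ) • (x + t • (2 : ℝ) • y) + (1 / 2 : ℝ) • (x + t • (2 : ℝ) • z) := by module
    have hcvx := hf.2 (mem_univ (x + t • (2 : ℝ) • y)) (mem_univ (x + t • (2 : ℝ) • z))
      (by norm_num : (0 : ℝ) ≤ 1 / 2) (by norm_num : (0 : ℝ) ≤ 1 / 2) (by norm_num)
    rw [← hmid, smul_eq_mul, smul_eq_mul] at hcvx
    simp only [diffQuot]
    rw [← add_div, div_div, div_le_div_iff₀ ht (by positivity)]
    nlinarith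
  have hlim := ((hf.tendsto_diffQuot x ((2 : ℝ) • y)).add
    (hf.tendsto_diffQuot x ((2 : ℝ) • z))).div_const 2
  rw [hf.dirDeriv_smul_of_pos x y two_pos, hf.dirDeriv_smul_of_pos x z two_pos,
    ← mul_add, mul_div_cancel_left₀ _ two_ne_zero] at hlim
  refine le_of_tendsto_of_tendsto (hf.tendsto_diffQuot x (y + z)) hlim ?_
  filter_upwards [self_mem_nhdsWithin] with t ht using hquot t ht

lemma ConvexOn.dirDeriv_add_dirDeriv_neg_nonneg (hf : ConvexOn ℝ univ f) (x y : E) :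
    0 ≤ dirDeriv f x y + dirDeriv f x (-y) := by
  simpa [dirDeriv_zero] using hf.dirDeriv_add_le x y (-y)

lemma ConvexOn.isLinearMap_dirDeriv (hf : ConvexOn ℝ univ f) (x : E)
    (hadd : ∀ y z, dirDeriv f x (y + z) = dirDeriv f x y + dirDeriv f x z) :
    IsLinearMap ℝ (dirDeriv f x) := by
  have hneg : ∀ y, dirDeriv f x (-y) = -dirDeriv f x y := fun y => by
    have h := hadd y (-y)
    rw [add_neg_cancel, dirDeriv_zero] at h
    linarith
  refine ⟨hadd, fun c y => ?_⟩
  rw [smul_eq_mul]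
  rcases lt_trichotomy c 0 with hc | rfl | hc
  · rw [← neg_neg c, neg_smul, hneg, hf.dirDeriv_smul_of_pos x y (neg_pos.2 hc)]
    ring
  · rw [zero_smul, zero_mul, dirDeriv_zero]
  · exact hf.dirDeriv_smul_of_pos x y hc

end DirDeriv

section Birkhoff

variable {γ : EuclideanSpace ℝ (Fin d) → ℝ}

lemma ConvexOn.birkhoffEps_zero_iff (hγ : ConvexOn ℝ univ γ) (x y : EuclideanSpace ℝ (Fin d)) :
    BirkhoffEps γ 0 x y ↔ 0 ≤ dirDeriv γ x y ∧ 0 ≤ dirDeriv γ x (-y) := by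
  simp only [BirkhoffEps, add_zero, hγ.dirDeriv_nonneg_iff, smul_neg, ← neg_smul]
  constructor
  · intro h
    exact ⟨fun t _ => h t, fun t _ => h (-t)⟩
  · rintro ⟨hpos, hneg⟩ l
    rcases lt_trichotomy l 0 with hl | rfl | hl
    · simpa using hneg (-l) (neg_pos.2 hl)
    · simp
    · exact hpos l hl

lemma ConvexOn.birkhoffEps_zero_iff_of_isLinearMap (hγ : ConvexOn ℝ univ γ)
    {x : EuclideanSpace ℝ (Fin d)} (hlin : IsLinearMap ℝ (dirDeriv γ x))
    (y : EuclideanSpace ℝ (Fin d)) :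
    BirkhoffEps γ 0 x y ↔ dirDeriv γ x y = 0 := by
  rw [hγ.birkhoffEps_zero_iff, hlin.map_neg y]
  constructor
  · rintro ⟨h₁, h₂⟩
    linarith
  · intro h
    simp [h]

lemma ConvexOn.gateauxDiffAt_iff_isLinearMap (hγ : ConvexOn ℝ univ γ)
    (x : EuclideanSpace ℝ (Fin d)) :
    GateauxDiffAt γ x ↔ IsLinearMap ℝ (dirDeriv γ x) := by
  constructor
  · rintro ⟨L, hL⟩
    have hdir : dirDeriv γ x = L :=
      funext fun y => tendsto_nhds_unique (hγ.tendsto_diffQuot x y) (hL y)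
    exact hdir ▸ L.isLinear
  · intro hlin
    exact ⟨IsLinearMap.mk' _ hlin, hγ.tendsto_diffQuot x⟩

end Birkhoff

namespace IsGauge

variable {γ : EuclideanSpace ℝ (Fin d) → ℝ}

lemma apply_zero (hγ : IsGauge γ) : γ 0 = 0 := by
  have h := hγ.2.2.1 0 2 two_pos
  rw [smul_zero] at h
  linarith

lemma apply_smul_of_nonneg (hγ : IsGauge γ) (x : EuclideanSpace ℝ (Fin d)) {c : ℝ}
    (hc : 0 ≤ c) : γ (c • x) = c * γ x := by
  rcases hc.eq_or_lt with rfl | hc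
  · simp [hγ.apply_zero]
  · exact hγ.2.2.1 x c hc

lemma convexOn (hγ : IsGauge γ) : ConvexOn ℝ univ γ := by
  refine ⟨convex_univ, fun u _ v _ a b ha hb _ => ?_⟩
  calc γ (a • u + b • v) ≤ γ (a • u) + γ (b • v) := hγ.2.2.2 _ _
    _ = a • γ u + b • γ v := by
      rw [hγ.apply_smul_of_nonneg u ha, hγ.apply_smul_of_nonneg v hb, smul_eq_mul, smul_eq_mul]

lemma birkhoffEps_zero_left (hγ : IsGauge γ) (y : EuclideanSpace ℝ (Fin d)) :
    BirkhoffEps γ 0 0 y := fun l => by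
  rw [hγ.apply_zero, zero_add, add_zero]
  exact hγ.1 _

lemma dirDeriv_smul_self_le (hγ : IsGauge γ) (x : EuclideanSpace ℝ (Fin d)) (c : ℝ) :
    dirDeriv γ x (c • x) ≤ c * γ x := by
  -- small enough that `x + t • c • x` is a positive multiple of `x`
  set t := (1 + |c|)⁻¹
  have ht : 0 < t := by positivity
  have hpos : 0 < 1 + t * c := by
    have ht' : t * (1 + |c|) = 1 := inv_mul_cancel₀ (by positivity)
    nlinarith [neg_abs_le c]
  calc dirDeriv γ x (c • x) ≤ diffQuot γ x (c • x) t := hγ.convexOn.dirDeriv_le_diffQuot x _ ht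
    _ = c * γ x := by
      have hline : x + t • c • x = (1 + t * c) • x := by module
      rw [diffQuot, hline, hγ.2.2.1 x _ hpos]
      field_simp
      ring

lemma dirDeriv_add_smul_self (hγ : IsGauge γ) (x y : EuclideanSpace ℝ (Fin d)) (c : ℝ) :
    dirDeriv γ x (y + c • x) = dirDeriv γ x y + c * γ x := by
  have hback : y + c • x + (-c) • x = y := by module
  have h₁ := hγ.convexOn.dirDeriv_add_le x y (c • x)
  have h₂ := hγ.convexOn.dirDeriv_add_le x (y + c • x) ((-c) • x)
  rw [hback] at h₂
  linarith [hγ.dirDeriv_smul_self_le x c, hγ.dirDeriv_smul_self_le x (-c)]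

lemma birkhoffEps_sub_smul_self (hγ : IsGauge γ) {x : EuclideanSpace ℝ (Fin d)} (hx : γ x ≠ 0)
    (y : EuclideanSpace ℝ (Fin d)) :
    BirkhoffEps γ 0 x (y - (dirDeriv γ x y / γ x) • x) := by
  have hneg : -(y - (dirDeriv γ x y / γ x) • x) = -y + (dirDeriv γ x y / γ x) • x := by module
  rw [hγ.convexOn.birkhoffEps_zero_iff, hneg, sub_eq_add_neg, ← neg_smul,
    hγ.dirDeriv_add_smul_self, hγ.dirDeriv_add_smul_self, neg_mul, div_mul_cancel₀ _ hx]
  constructor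
  · simp
  · linarith [hγ.convexOn.dirDeriv_add_dirDeriv_neg_nonneg x y]

lemma le_dirDeriv_add_of_birkhoffEps_add (hγ : IsGauge γ) {x : EuclideanSpace ℝ (Fin d)}
    (hx : γ x ≠ 0)
    (hadd : ∀ y z, BirkhoffEps γ 0 x y → BirkhoffEps γ 0 x z → BirkhoffEps γ 0 x (y + z))
    (y z : EuclideanSpace ℝ (Fin d)) :
    dirDeriv γ x y + dirDeriv γ x z ≤ dirDeriv γ x (y + z) := by
  have h := hadd _ _ (hγ.birkhoffEps_sub_smul_self hx y) (hγ.birkhoffEps_sub_smul_self hx z)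
  have hsum : y - (dirDeriv γ x y / γ x) • x + (z - (dirDeriv γ x z / γ x) • x) =
      y + z + (-(dirDeriv γ x y / γ x + dirDeriv γ x z / γ x)) • x := by module
  rw [hsum, hγ.convexOn.birkhoffEps_zero_iff, hγ.dirDeriv_add_smul_self, neg_mul, add_mul,
    div_mul_cancel₀ _ hx, div_mul_cancel₀ _ hx] at h
  linarith [h.1]

end IsGauge

theorem gateaux_iff_right_additive_general
    (γ : EuclideanSpace ℝ (Fin d) → ℝ) (hγ : IsGauge γ) :
    (∀ x : EuclideanSpace ℝ (Fin d), x ≠ 0 → GateauxDiffAt γ x) ↔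
    (∀ x y z : EuclideanSpace ℝ (Fin d),
      BirkhoffEps γ 0 x y → BirkhoffEps γ 0 x z → BirkhoffEps γ 0 x (y + z)) := by
  have hcvx := hγ.convexOn
  constructor
  · intro hdiff x y z hy hz
    rcases eq_or_ne x 0 with rfl | hx
    · exact hγ.birkhoffEps_zero_left _
    have hlin := (hcvx.gateauxDiffAt_iff_isLinearMap x).1 (hdiff x hx)
    rw [hcvx.birkhoffEps_zero_iff_of_isLinearMap hlin] at hy hz ⊢
    rw [hlin.map_add, hy, hz, add_zero]
  · intro hadd x hx
    have hγx : γ x ≠ 0 := fun h => hx (hγ.2.1 x h)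
    rw [hcvx.gateauxDiffAt_iff_isLinearMap]
    exact hcvx.isLinearMap_dirDeriv x fun y z => le_antisymm (hcvx.dirDeriv_add_le x y z)
      (hγ.le_dirDeriv_add_of_birkhoffEps_add hγx (hadd x) y z)

theorem gateaux_iff_right_additive (hd : 2 ≤ d)
    (γ : EuclideanSpace ℝ (Fin d) → ℝ) (hγ : IsGauge γ) :
    (∀ x : EuclideanSpace ℝ (Fin d), x ≠ 0 → GateauxDiffAt γ x) ↔
    (∀ x y z : EuclideanSpace ℝ (Fin d),
      BirkhoffEps γ 0 x y → BirkhoffEps γ 0 x z → BirkhoffEps γ 0 x (y + z)) :=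
  gateaux_iff_right_additive_general γ hγ
end
end
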